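/- arXiv:1802.08941 — 4 statements merged into one kernel-verified Lean document; each statement's English description precedes it below -/
import Mathlib

section
/- Let P and Q be symmetric N×N real matrices. If Q is positive semidefinite and P is positive definite on the null space of Q (i.e., xᵀPx > 0 for all x ≠ 0 with xᵀQx = 0), then there exists a scalar c̄ such that P + cQ is positive definite for all c ≥ c̄. -/
open Matrix

private lemma aux_posdef {N : ℕ} (P Q : Matrix (Fin N) (Fin N) ℝ)
    (hP : P.IsSymm) (hQ : Q.IsSymm) (c : ℝ)
    (hpos : ∀ y : Fin N → ℝ, ‖y‖ = 1 → 0 < y ⬝ᵥ P.mulVec y + c * (y ⬝ᵥ Q.mulVec y)) :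
    (P + c • Q).PosDef := by
  refine Matrix.PosDef.of_dotProduct_mulVec_pos ?_ ?_
  · rw [Matrix.IsHermitian, conjTranspose_eq_transpose_of_trivial, transpose_add,
      transpose_smul, hP, hQ]
  · intro x hx
    rw [star_trivial]
    have hxn : (0:ℝ) < ‖x‖ := norm_pos_iff.mpr hx
    set y : Fin N → ℝ := ‖x‖⁻¹ • x with hy
    have hyn : ‖y‖ = 1 := by
      rw [hy, norm_smul, norm_inv, norm_norm, inv_mul_cancel₀ (ne_of_gt hxn)]
    have h := hpos y hyn
    have hPy : y ⬝ᵥ P.mulVec y = ‖x‖⁻¹ * (‖x‖⁻¹ * (x ⬝ᵥ P.mulVec x)) := by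
      rw [hy, Matrix.mulVec_smul, smul_dotProduct, dotProduct_smul]; simp
    have hQy : y ⬝ᵥ Q.mulVec y = ‖x‖⁻¹ * (‖x‖⁻¹ * (x ⬝ᵥ Q.mulVec x)) := by
      rw [hy, Matrix.mulVec_smul, smul_dotProduct, dotProduct_smul]; simp
    rw [hPy, hQy] at h
    have hinv : (0:ℝ) < ‖x‖⁻¹ := inv_pos.mpr hxn
    have : 0 < x ⬝ᵥ P.mulVec x + c * (x ⬝ᵥ Q.mulVec x) := by
      have h2 := mul_pos (mul_pos hxn hxn) h
      have heq : ‖x‖ * ‖x‖ * (‖x‖⁻¹ * (‖x‖⁻¹ * (x ⬝ᵥ P.mulVec x)) +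
          c * (‖x‖⁻¹ * (‖x‖⁻¹ * (x ⬝ᵥ Q.mulVec x)))) =
          x ⬝ᵥ P.mulVec x + c * (x ⬝ᵥ Q.mulVec x) := by
        field_simp
      rw [heq] at h2
      exact h2
    have hexp : x ⬝ᵥ (P + c • Q) *ᵥ x = x ⬝ᵥ P.mulVec x + c * (x ⬝ᵥ Q.mulVec x) := by
      rw [Matrix.add_mulVec, dotProduct_add, Matrix.smul_mulVec, dotProduct_smul]
      simp [Matrix.mulVec]
    rw [hexp]; exact this

theorem stmt0 {N : ℕ} (P Q : Matrix (Fin N) (Fin N) ℝ)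
    (hP : P.IsSymm) (hQ : Q.IsSymm) (hQpsd : Q.PosSemidef)
    (hPpos : ∀ x : Fin N → ℝ, x ≠ 0 → x ⬝ᵥ Q.mulVec x = 0 → 0 < x ⬝ᵥ P.mulVec x) :
    ∃ cbar : ℝ, ∀ c : ℝ, cbar ≤ c → (P + c • Q).PosDef := by
  classical
  set fP : (Fin N → ℝ) → ℝ := fun x => x ⬝ᵥ P.mulVec x with hfP
  set fQ : (Fin N → ℝ) → ℝ := fun x => x ⬝ᵥ Q.mulVec x with hfQ
  have hcP : Continuous fP :=
    Continuous.dotProduct continuous_id (continuous_const.matrix_mulVec continuous_id)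
  have hcQ : Continuous fQ :=
    Continuous.dotProduct continuous_id (continuous_const.matrix_mulVec continuous_id)
  have hS : IsCompact (Metric.sphere (0 : Fin N → ℝ) 1) := isCompact_sphere 0 1
  set A : Set (Fin N → ℝ) := Metric.sphere (0 : Fin N → ℝ) 1 ∩ fP ⁻¹' Set.Iic 0 with hA
  have hAc : IsCompact A := hS.inter_right (isClosed_Iic.preimage hcP)
  have hQnn : ∀ x : Fin N → ℝ, 0 ≤ fQ x := by
    intro x
    have := hQpsd.dotProduct_mulVec_nonneg x
    rwa [star_trivial] at this
  have hApos : ∀ y ∈ A, 0 < fQ y := by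
    rintro y ⟨hy1, hy2⟩
    rcases lt_or_eq_of_le (hQnn y) with h | h
    · exact h
    · exfalso
      have hyne : y ≠ 0 := by
        intro h0
        rw [mem_sphere_iff_norm, h0, sub_zero, norm_zero] at hy1
        norm_num at hy1
      have := hPpos y hyne h.symm
      simp only [Set.mem_preimage, Set.mem_Iic] at hy2
      linarith
  rcases A.eq_empty_or_nonempty with hAe | hAne
  · -- A empty : every unit vector has fP > 0
    refine ⟨0, fun c hc => aux_posdef P Q hP hQ c fun y hy => ?_⟩
    have hyS : y ∈ Metric.sphere (0 : Fin N → ℝ) 1 := by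
      simpa [mem_sphere_iff_norm] using hy
    have hPy : 0 < fP y := by
      by_contra h
      push_neg at h
      have : y ∈ A := ⟨hyS, by simpa [Set.mem_preimage] using h⟩
      rw [hAe] at this
      exact this
    have := hQnn y
    nlinarith
  · obtain ⟨y0, hy0A, hy0min⟩ := hAc.exists_isMinOn hAne hcQ.continuousOn
    have hSne : (Metric.sphere (0 : Fin N → ℝ) 1).Nonempty := ⟨y0, hy0A.1⟩
    obtain ⟨z0, hz0S, hz0min⟩ := hS.exists_isMinOn hSne hcP.continuousOn
    set ε : ℝ := fQ y0 with hε
    set m : ℝ := fP z0 with hm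
    have hεpos : 0 < ε := hApos y0 hy0A
    refine ⟨max 0 ((1 - m) / ε), fun c hc => aux_posdef P Q hP hQ c fun y hy => ?_⟩
    have hc0 : 0 ≤ c := le_trans (le_max_left _ _) hc
    have hc1 : (1 - m) / ε ≤ c := le_trans (le_max_right _ _) hc
    have hyS : y ∈ Metric.sphere (0 : Fin N → ℝ) 1 := by
      simpa [mem_sphere_iff_norm] using hy
    by_cases hPy : 0 < fP y
    · have := hQnn y
      nlinarith
    · push_neg at hPy
      have hyA : y ∈ A := ⟨hyS, by simpa [Set.mem_preimage] using hPy⟩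
      have h1 : ε ≤ fQ y := hy0min hyA
      have h2 : m ≤ fP y := hz0min hyS
      have h3 : 1 - m ≤ c * ε := (div_le_iff₀ hεpos).mp hc1
      nlinarith [mul_le_mul_of_nonneg_left h1 hc0]
end

section
/- Let f : ℝ^N → ℝ be twice continuously differentiable, A ∈ ℝ^{M×N}, b ∈ ℝ^M, and x* satisfy Ax* = b. Then the condition '⟨y, ∇²f(x*) y⟩ > 0 for all y ≠ 0 with Ay = 0' holds if and only if there exists γ > 0 such that ∇²f(x*) + γ AᵀA is positive definite. -/
open Matrix Filter Topology

private lemma cont_quad {N : ℕ} (M : Matrix (Fin N) (Fin N) ℝ) :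
    Continuous fun y : Fin N → ℝ => y ⬝ᵥ M.mulVec y := by
  simp only [dotProduct, Matrix.mulVec]
  fun_prop

private lemma quad_ata {M N : ℕ} (A : Matrix (Fin M) (Fin N) ℝ) (y : Fin N → ℝ) :
    y ⬝ᵥ (Aᵀ * A).mulVec y = (A.mulVec y) ⬝ᵥ (A.mulVec y) := by
  rw [← Matrix.mulVec_mulVec, Matrix.dotProduct_mulVec, Matrix.vecMul_transpose]

private lemma quad_expand {N : ℕ} (H P : Matrix (Fin N) (Fin N) ℝ) (γ : ℝ) (y : Fin N → ℝ) :
    y ⬝ᵥ (H + γ • P).mulVec y = y ⬝ᵥ H.mulVec y + γ * (y ⬝ᵥ P.mulVec y) := by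
  rw [Matrix.add_mulVec, dotProduct_add, Matrix.smul_mulVec, dotProduct_smul,
    smul_eq_mul]

theorem stmt2 {N M : ℕ} (f : EuclideanSpace ℝ (Fin N) → ℝ) (hf : ContDiff ℝ 2 f)
    (A : Matrix (Fin M) (Fin N) ℝ) (b : Fin M → ℝ) (xstar : EuclideanSpace ℝ (Fin N))
    (hfeas : A.mulVec xstar = b)
    (H : Matrix (Fin N) (Fin N) ℝ) (hH : H.IsSymm)
    (hHf : ∀ i j, H i j =
      iteratedFDeriv ℝ 2 f xstar ![EuclideanSpace.single i 1, EuclideanSpace.single j 1]) :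
    (∀ y : Fin N → ℝ, y ≠ 0 → A.mulVec y = 0 → 0 < y ⬝ᵥ H.mulVec y) ↔
      ∃ γ : ℝ, 0 < γ ∧ (H + γ • (Aᵀ * A)).PosDef := by
  have symm_herm : ∀ P : Matrix (Fin N) (Fin N) ℝ, P.IsSymm → P.IsHermitian := by
    intro P hP; exact isHermitian_iff_isSymm.mpr hP
  have hHherm : H.IsHermitian := symm_herm H hH
  have hsnn : ∀ y : Fin N → ℝ, 0 ≤ y ⬝ᵥ (Aᵀ * A).mulVec y := by
    intro y
    rw [quad_ata]
    exact Finset.sum_nonneg fun i _ => mul_self_nonneg _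
  constructor
  · intro hker
    by_contra hcon
    push_neg at hcon
    have herm : ∀ γ : ℝ, (H + γ • (Aᵀ * A)).IsHermitian :=
      fun γ => hHherm.add (symm_herm _ (by
        rw [Matrix.IsSymm, Matrix.transpose_smul, Matrix.transpose_mul,
          Matrix.transpose_transpose]))
    -- for each n obtain a unit vector with nonpositive quadratic form
    have key : ∀ n : ℕ, ∃ z : Fin N → ℝ, ‖z‖ = 1 ∧
        z ⬝ᵥ H.mulVec z + ((n : ℝ) + 1) * (z ⬝ᵥ (Aᵀ * A).mulVec z) ≤ 0 := by
      intro n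
      have hnp := hcon ((n : ℝ) + 1) (by positivity)
      rw [Matrix.posDef_iff_dotProduct_mulVec] at hnp
      push_neg at hnp
      obtain ⟨y, hy0, hyle⟩ := hnp (herm _)
      have hyle' : y ⬝ᵥ H.mulVec y + ((n : ℝ) + 1) * (y ⬝ᵥ (Aᵀ * A).mulVec y) ≤ 0 := by
        rw [← quad_expand]; simpa using hyle
      have hny : ‖y‖ ≠ 0 := norm_ne_zero_iff.mpr hy0
      refine ⟨‖y‖⁻¹ • y, ?_, ?_⟩
      · rw [norm_smul, norm_inv, norm_norm, inv_mul_cancel₀ hny]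
      · have hsc : ∀ P : Matrix (Fin N) (Fin N) ℝ,
            (‖y‖⁻¹ • y) ⬝ᵥ P.mulVec (‖y‖⁻¹ • y) = ‖y‖⁻¹ ^ 2 * (y ⬝ᵥ P.mulVec y) := by
          intro P
          rw [Matrix.mulVec_smul, smul_dotProduct, dotProduct_smul, smul_eq_mul,
            smul_eq_mul]
          ring
        rw [hsc, hsc]
        have h2 : (0:ℝ) ≤ ‖y‖⁻¹ ^ 2 := sq_nonneg _
        nlinarith
    choose z hz1 hz2 using key
    have hmem : ∀ n, z n ∈ Metric.sphere (0 : Fin N → ℝ) 1 := by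
      intro n; simpa [mem_sphere_zero_iff_norm] using hz1 n
    obtain ⟨w, hw, φ, hφ, hlim⟩ :=
      (isCompact_sphere (0 : Fin N → ℝ) 1).tendsto_subseq hmem
    have hw1 : ‖w‖ = 1 := by simpa [mem_sphere_zero_iff_norm] using hw
    have hw0 : w ≠ 0 := by
      intro h; rw [h, norm_zero] at hw1; norm_num at hw1
    -- limits of the two quadratic forms along the subsequence
    have hqH : Tendsto (fun n => z (φ n) ⬝ᵥ H.mulVec (z (φ n))) atTop
        (𝓝 (w ⬝ᵥ H.mulVec w)) := ((cont_quad H).tendsto w).comp hlim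
    have hqS : Tendsto (fun n => z (φ n) ⬝ᵥ (Aᵀ * A).mulVec (z (φ n))) atTop
        (𝓝 (w ⬝ᵥ (Aᵀ * A).mulVec w)) := ((cont_quad (Aᵀ * A)).tendsto w).comp hlim
    -- w ⬝ H w ≤ 0
    have hqHle : ∀ n, z (φ n) ⬝ᵥ H.mulVec (z (φ n)) ≤ 0 := by
      intro n
      have h1 := hz2 (φ n)
      have h2 := hsnn (z (φ n))
      nlinarith [Nat.cast_nonneg (α := ℝ) (φ n)]
    have hHw : w ⬝ᵥ H.mulVec w ≤ 0 := le_of_tendsto' hqH hqHle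
    -- s(z φ n) ≤ -qH / (φ n + 1)
    have hbound : ∀ n, z (φ n) ⬝ᵥ (Aᵀ * A).mulVec (z (φ n)) ≤
        (-(z (φ n) ⬝ᵥ H.mulVec (z (φ n)))) * ((φ n : ℝ) + 1)⁻¹ := by
      intro n
      have hpos : (0:ℝ) < (φ n : ℝ) + 1 := by positivity
      rw [le_mul_inv_iff₀ hpos]
      have := hz2 (φ n)
      nlinarith
    have hφtop : Tendsto (fun n => ((φ n : ℝ) + 1)⁻¹) atTop (𝓝 0) := by
      apply tendsto_inv_atTop_zero.comp
      apply tendsto_atTop_add_const_right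
      exact tendsto_natCast_atTop_atTop.comp hφ.tendsto_atTop
    have hrhs : Tendsto (fun n => (-(z (φ n) ⬝ᵥ H.mulVec (z (φ n)))) * ((φ n : ℝ) + 1)⁻¹)
        atTop (𝓝 0) := by
      have := (hqH.neg.mul hφtop)
      simpa using this
    have hSw : w ⬝ᵥ (Aᵀ * A).mulVec w ≤ 0 :=
      le_of_tendsto_of_tendsto' hqS hrhs hbound
    have hSw0 : w ⬝ᵥ (Aᵀ * A).mulVec w = 0 := le_antisymm hSw (hsnn w)
    have hAw : A.mulVec w = 0 := by
      rw [quad_ata] at hSw0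
      exact dotProduct_self_eq_zero.mp hSw0
    exact absurd (hker w hw0 hAw) (not_lt.mpr hHw)
  · rintro ⟨γ, hγ, hpd⟩ y hy0 hAy
    have := hpd.dotProduct_mulVec_pos hy0
    have hle : 0 < y ⬝ᵥ (H + γ • (Aᵀ * A)).mulVec y := by simpa using this
    rw [quad_expand, quad_ata, hAy] at hle
    simpa using hle
end

section
/- Let H be a symmetric N×N matrix, A ∈ ℝ^{M×N}, ρ, β, δ > 0. For the block matrices Q = [[I_N, 0], [-ρA, I_M]] and T = [[I_N - (1/β)(H + ρAᵀA), -(1/β)Aᵀ], [0, I_M]], one has det(T - (1+δ)Q) = det(δ²I_N + (δ/β)H + (ρ(1+2δ)/β)AᵀA) (up to a sign depending on M). -/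
open Matrix

theorem stmt7 {N M : ℕ} (H : Matrix (Fin N) (Fin N) ℝ) (hH : H.IsSymm)
    (A : Matrix (Fin M) (Fin N) ℝ) (ρ β δ : ℝ) (hρ : 0 < ρ) (hβ : 0 < β) (hδ : 0 < δ) :
    (Matrix.fromBlocks (1 - (1 / β) • (H + ρ • (Aᵀ * A))) ((-(1 / β)) • Aᵀ) 0 1
        - (1 + δ) • Matrix.fromBlocks 1 0 ((-ρ) • A) 1).det =
      (-δ) ^ M * (-δ⁻¹) ^ N *
        (δ ^ 2 • (1 : Matrix (Fin N) (Fin N) ℝ) + (δ / β) • H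
          + (ρ * (1 + 2 * δ) / β) • (Aᵀ * A)).det := by
  rw [Matrix.fromBlocks_smul, sub_eq_add_neg, Matrix.fromBlocks_neg, Matrix.fromBlocks_add]
  have hD : (1 : Matrix (Fin M) (Fin M) ℝ) + -((1 + δ) • 1) = (-δ) • 1 := by
    match_scalars; ring
  rw [hD]
  haveI : Invertible ((-δ) • (1 : Matrix (Fin M) (Fin M) ℝ)) :=
    ⟨(-δ⁻¹) • 1, by
      rw [Matrix.smul_mul, Matrix.mul_smul, Matrix.one_mul, smul_smul]
      field_simp; exact one_smul _ _, by
      rw [Matrix.smul_mul, Matrix.mul_smul, Matrix.one_mul, smul_smul]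
      field_simp; exact one_smul _ _⟩
  rw [Matrix.det_fromBlocks₂₂]
  have hinv : ⅟((-δ) • (1 : Matrix (Fin M) (Fin M) ℝ)) = (-δ⁻¹) • 1 := by
    apply invOf_eq_right_inv
    rw [Matrix.smul_mul, Matrix.mul_smul, Matrix.one_mul, smul_smul]
    field_simp; exact one_smul _ _
  rw [hinv]
  have hS : ((1 : Matrix (Fin N) (Fin N) ℝ) - (1 / β) • (H + ρ • (Aᵀ * A)) + -((1 + δ) • 1))
      - ((-(1 / β)) • Aᵀ + -((1 + δ) • 0)) * ((-δ⁻¹) • (1 : Matrix (Fin M) (Fin M) ℝ)) * (0 + -((1 + δ) • ((-ρ) • A)))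
      = (-δ⁻¹) • (δ ^ 2 • (1 : Matrix (Fin N) (Fin N) ℝ) + (δ / β) • H
          + (ρ * (1 + 2 * δ) / β) • (Aᵀ * A)) := by
    simp only [smul_zero, neg_zero, zero_add, add_zero, neg_neg, smul_smul, smul_neg,
      Matrix.mul_neg, Matrix.neg_mul, Matrix.smul_mul, Matrix.mul_smul, Matrix.mul_one,
      neg_smul]
    match_scalars <;> field_simp <;> ring
  rw [hS, Matrix.det_smul, Matrix.det_smul, Matrix.det_one, mul_one]
  simp only [Fintype.card_fin]
  ring
end

section
/- Let H be a symmetric N×N matrix, A ∈ ℝ^{M×N}, ρ, β > 0. Suppose there exists y with ‖y‖ = 1, Ay = 0, and yᵀHy < 0. Then there exists δ* > 0 such that det(δ*²I_N + (δ*/β)H + (ρ(1+2δ*)/β)AᵀA) = 0; equivalently the block matrix pencil T - μQ (with Q, T as in the GPDA linearization) has a real eigenvalue μ = 1 + δ* > 1. -/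
open Matrix Filter Topology

set_option maxHeartbeats 4000000 in

theorem stmt10 {N M : ℕ} (H : Matrix (Fin N) (Fin N) ℝ) (hH : H.IsSymm)
    (A : Matrix (Fin M) (Fin N) ℝ) (ρ β : ℝ) (hρ : 0 < ρ) (hβ : 0 < β)
    (y : EuclideanSpace ℝ (Fin N)) (hy : ‖y‖ = 1) (hAy : A.mulVec y = 0)
    (hyH : y ⬝ᵥ H.mulVec y < 0) :
    ∃ δstar : ℝ, 0 < δstar ∧
      (δstar ^ 2 • (1 : Matrix (Fin N) (Fin N) ℝ) + (δstar / β) • H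
        + (ρ * (1 + 2 * δstar) / β) • (Aᵀ * A)).det = 0 := by
  classical
  set q : (Fin N → ℝ) → ℝ := fun x => x ⬝ᵥ H.mulVec x with hq
  set p : (Fin N → ℝ) → ℝ := fun x => (A.mulVec x) ⬝ᵥ (A.mulVec x) with hp
  set n : (Fin N → ℝ) → ℝ := fun x => x ⬝ᵥ x with hn
  set Φ : ℝ → (Fin N → ℝ) → ℝ :=
    fun δ x => δ ^ 2 * n x + (δ / β) * q x + (ρ * (1 + 2 * δ) / β) * p x with hΦ
  set Mat : ℝ → Matrix (Fin N) (Fin N) ℝ := fun δ =>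
    δ ^ 2 • (1 : Matrix (Fin N) (Fin N) ℝ) + (δ / β) • H
      + (ρ * (1 + 2 * δ) / β) • (Aᵀ * A) with hMat
  have hAtA : ∀ x v : Fin N → ℝ, x ⬝ᵥ (Aᵀ * A).mulVec v = (A.mulVec x) ⬝ᵥ (A.mulVec v) := by
    intro x v
    rw [← mulVec_mulVec, dotProduct_mulVec, vecMul_transpose]
  have key : ∀ (δ : ℝ) (x : Fin N → ℝ), x ⬝ᵥ (Mat δ).mulVec x = Φ δ x := by
    intro δ x
    simp only [hMat, hΦ, hq, hp, hn, add_mulVec, smul_mulVec, one_mulVec,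
      dotProduct_add, dotProduct_smul, smul_eq_mul, hAtA]
  -- nonnegativity of p and n
  have hp0 : ∀ x, 0 ≤ p x := fun x => Finset.sum_nonneg fun i _ => mul_self_nonneg _
  have hn0 : ∀ x, 0 ≤ n x := fun x => Finset.sum_nonneg fun i _ => mul_self_nonneg _
  -- unit (sup norm) vectors have n x ≥ 1
  have hn1 : ∀ x : Fin N → ℝ, ‖x‖ = 1 → 1 ≤ n x := by
    intro x hx
    have h1 : ‖x‖ ≤ Real.sqrt (n x) := by
      rw [pi_norm_le_iff_of_nonneg (Real.sqrt_nonneg _)]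
      intro i
      have h2 : x i * x i ≤ n x :=
        Finset.single_le_sum (f := fun j => x j * x j)
          (fun j _ => mul_self_nonneg _) (Finset.mem_univ i)
      have h3 : ‖x i‖ = Real.sqrt (x i * x i) := by
        rw [Real.sqrt_mul_self_eq_abs, Real.norm_eq_abs]
      rw [h3]
      exact Real.sqrt_le_sqrt h2
    nlinarith [Real.sq_sqrt (hn0 x), hx.symm ▸ h1, Real.sqrt_nonneg (n x)]
  -- bound on q over unit sphere
  set Cq : ℝ := ∑ i, ∑ j, |H i j| with hCq
  have hCqb : ∀ x : Fin N → ℝ, ‖x‖ = 1 → |q x| ≤ Cq := by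
    intro x hx
    have hxi : ∀ i, |x i| ≤ 1 := by
      intro i
      have := norm_le_pi_norm x i
      rwa [hx, Real.norm_eq_abs] at this
    calc |q x| ≤ ∑ i, |x i * H.mulVec x i| := Finset.abs_sum_le_sum_abs _ _
      _ ≤ ∑ i, ∑ j, |H i j| := by
          refine Finset.sum_le_sum fun i _ => ?_
          rw [abs_mul]
          have h2 : |H.mulVec x i| ≤ ∑ j, |H i j| := by
            have hmv : H.mulVec x i = ∑ j, H i j * x j := by
              simp [Matrix.mulVec, dotProduct]
            rw [hmv]
            calc |∑ j, H i j * x j| ≤ ∑ j, |H i j * x j| := Finset.abs_sum_le_sum_abs _ _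
              _ ≤ ∑ j, |H i j| := by
                  refine Finset.sum_le_sum fun j _ => ?_
                  rw [abs_mul]
                  nlinarith [hxi j, abs_nonneg (H i j), abs_nonneg (x j)]
          nlinarith [hxi i, abs_nonneg (x i), abs_nonneg (H.mulVec x i),
            Finset.sum_nonneg (fun j (_ : j ∈ Finset.univ) => abs_nonneg (H i j))]
  -- continuity of Φ
  have hΦc : Continuous fun pr : ℝ × (Fin N → ℝ) => Φ pr.1 pr.2 := by
    simp only [hΦ, hq, hp, hn, Matrix.mulVec, dotProduct]
    fun_prop
  -- scaling
  have hΦs : ∀ (a δ : ℝ) (x : Fin N → ℝ), Φ δ (a • x) = a ^ 2 * Φ δ x := by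
    intro a δ x
    simp only [hΦ, hq, hp, hn, Matrix.mulVec_smul, smul_dotProduct, dotProduct_smul,
      smul_eq_mul]
    ring
  -- normalized witness
  have hyne : y ≠ 0 := by
    intro h; rw [h, norm_zero] at hy; exact one_ne_zero hy.symm
  set z : Fin N → ℝ := y.ofLp with hz
  have hzne : z ≠ 0 := fun h => hyne (by simpa [hz] using congrArg (WithLp.toLp 2) h)
  set c : ℝ := ‖z‖ with hc
  have hcpos : 0 < c := norm_pos_iff.mpr hzne
  set w : Fin N → ℝ := c⁻¹ • z with hw
  have hwnorm : ‖w‖ = 1 := by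
    rw [hw, norm_smul, Real.norm_eq_abs, abs_inv, abs_of_pos hcpos, ← hc,
      inv_mul_cancel₀ (ne_of_gt hcpos)]
  have hqw : q w < 0 := by
    have : q w = (c⁻¹) ^ 2 * q z := by
      simp only [hq, hw, Matrix.mulVec_smul, smul_dotProduct, dotProduct_smul, smul_eq_mul]
      ring
    rw [this]
    have hqz : q z < 0 := hyH
    have : 0 < (c⁻¹) ^ 2 := by positivity
    nlinarith
  have hpw : p w = 0 := by
    have hAz : A.mulVec z = 0 := hAy
    simp only [hp, hw, Matrix.mulVec_smul, hAz, smul_zero, dotProduct_zero]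
  have hnw : 1 ≤ n w := hn1 w hwnorm
  -- δ0
  set δ0 : ℝ := -(q w) / (2 * β * n w) with hδ0
  have hδ0pos : 0 < δ0 := by
    rw [hδ0]
    have hnwpos : 0 < n w := by linarith
    exact div_pos (by linarith) (by positivity)
  have hΦδ0 : Φ δ0 w < 0 := by
    rw [hΦ]
    dsimp only
    rw [hpw]
    have hnwpos : 0 < n w := by linarith
    have hd : δ0 * (2 * β * n w) = -(q w) := by
      rw [hδ0]; field_simp
    have hq2 : δ0 / β * q w = -(2 * δ0 ^ 2 * n w) := by
      have hβ' : (β:ℝ) ≠ 0 := ne_of_gt hβ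
      field_simp
      nlinarith [hd]
    have hpos : 0 < δ0 ^ 2 * n w := by positivity
    rw [hq2]
    nlinarith [hpos]
  -- the set S
  set S : Set ℝ := {δ | δ0 ≤ δ ∧ ∃ x : Fin N → ℝ, ‖x‖ = 1 ∧ Φ δ x < 0} with hS
  have hS0 : δ0 ∈ S := ⟨le_refl _, w, hwnorm, hΦδ0⟩
  have hSub : ∀ δ ∈ S, δ ≤ Cq / β := by
    rintro δ ⟨hδle, x, hx1, hΦneg⟩
    have hδpos : 0 < δ := lt_of_lt_of_le hδ0pos hδle
    have h1 : 1 ≤ n x := hn1 x hx1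
    have h2 : |q x| ≤ Cq := hCqb x hx1
    have h3 : 0 ≤ (ρ * (1 + 2 * δ) / β) * p x := by
      have := hp0 x
      have : 0 ≤ ρ * (1 + 2 * δ) / β := by positivity
      positivity
    rw [hΦ] at hΦneg
    dsimp only at hΦneg
    -- δ^2 * n x + (δ/β) * q x + nonneg < 0
    have hδβ : 0 ≤ δ / β := by positivity
    have habs := abs_le.mp h2
    have h4 : δ ^ 2 ≤ (δ / β) * Cq := by
      have e1 : δ ^ 2 * 1 ≤ δ ^ 2 * n x :=
        mul_le_mul_of_nonneg_left h1 (sq_nonneg δ)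
      have e2 : (δ / β) * (-Cq) ≤ (δ / β) * q x :=
        mul_le_mul_of_nonneg_left habs.1 hδβ
      linarith [e1, e2, h3, hΦneg]
    have h5 : δ * δ ≤ δ * (Cq / β) := by
      calc δ * δ = δ ^ 2 := (sq δ).symm
        _ ≤ (δ / β) * Cq := h4
        _ = δ * (Cq / β) := by ring
    exact le_of_mul_le_mul_left h5 hδpos
  have hSbdd : BddAbove S := ⟨Cq / β, fun δ hδ => hSub δ hδ⟩
  set δs : ℝ := sSup S with hδs
  have hδsge : δ0 ≤ δs := le_csSup hSbdd hS0
  have hδspos : 0 < δs := lt_of_lt_of_le hδ0pos hδsge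
  -- Claim 1: Φ δs is nonneg on the sphere
  have claim1 : ∀ x : Fin N → ℝ, ‖x‖ = 1 → 0 ≤ Φ δs x := by
    intro x hx
    by_contra hlt
    push_neg at hlt
    have hcont : Continuous fun t : ℝ => Φ t x :=
      hΦc.comp (continuous_id.prodMk continuous_const)
    have hev : ∀ᶠ t in 𝓝[>] δs, Φ t x < 0 :=
      ((hcont.tendsto δs).eventually_lt_const hlt).filter_mono nhdsWithin_le_nhds
    obtain ⟨t, htneg, htmem⟩ := (hev.and (eventually_mem_nhdsWithin)).exists
    have htS : t ∈ S := ⟨le_of_lt (lt_of_le_of_lt hδsge htmem), x, hx, htneg⟩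
    have : t ≤ δs := le_csSup hSbdd htS
    exact absurd htmem (by simpa using not_lt.mpr this)
  -- Claim 1': Φ δs is nonneg everywhere
  have claim1' : ∀ x : Fin N → ℝ, 0 ≤ Φ δs x := by
    intro x
    by_cases hx0 : x = 0
    · subst hx0
      simp [hΦ, hq, hp, hn, Matrix.mulVec_zero, dotProduct_zero]
    · have hcx : (0:ℝ) < ‖x‖ := norm_pos_iff.mpr hx0
      have hu : ‖(‖x‖)⁻¹ • x‖ = 1 := by
        rw [norm_smul, Real.norm_eq_abs, abs_inv, abs_of_pos hcx,
          inv_mul_cancel₀ (ne_of_gt hcx)]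
      have h1 := claim1 _ hu
      rw [hΦs] at h1
      have h2 : (0:ℝ) < ((‖x‖)⁻¹) ^ 2 := by positivity
      have h3 : ((‖x‖)⁻¹) ^ 2 * 0 ≤ ((‖x‖)⁻¹) ^ 2 * Φ δs x := by simpa using h1
      simpa using le_of_mul_le_mul_left h3 h2
  -- Claim 2: Φ δs vanishes at some unit vector
  obtain ⟨x0, hx0norm, hx0zero⟩ : ∃ x : Fin N → ℝ, ‖x‖ = 1 ∧ Φ δs x = 0 := by
    have hseq : ∀ k : ℕ, ∃ δ ∈ S, δs - 1 / (k + 1) < δ := by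
      intro k
      refine exists_lt_of_lt_csSup ⟨δ0, hS0⟩ ?_
      have : (0:ℝ) < 1 / (k + 1) := by positivity
      linarith
    choose d hdS hdlt using hseq
    have hdle : ∀ k, d k ≤ δs := fun k => le_csSup hSbdd (hdS k)
    have hdt : Tendsto d atTop (𝓝 δs) := by
      refine tendsto_of_tendsto_of_tendsto_of_le_of_le
        (g := fun k : ℕ => δs - 1 / (k + 1)) (h := fun _ => δs) ?_ tendsto_const_nhds
        (fun k => le_of_lt (hdlt k)) hdle
      have := tendsto_one_div_add_atTop_nhds_zero_nat (𝕜 := ℝ)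
      have h2 : Tendsto (fun k : ℕ => δs - 1 / (k + 1)) atTop (𝓝 (δs - 0)) :=
        tendsto_const_nhds.sub this
      rw [sub_zero] at h2
      exact h2
    choose xs hxsnorm hxsneg using fun k => (hdS k).2
    have hxsph : ∀ k, xs k ∈ Metric.sphere (0 : Fin N → ℝ) 1 := by
      intro k; rw [mem_sphere_zero_iff_norm]; exact hxsnorm k
    obtain ⟨x, hxmem, σ, hσmono, hσt⟩ :=
      (isCompact_sphere (0 : Fin N → ℝ) 1).tendsto_subseq hxsph
    have hxnorm : ‖x‖ = 1 := mem_sphere_zero_iff_norm.mp hxmem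
    have hdσ : Tendsto (d ∘ σ) atTop (𝓝 δs) := hdt.comp hσmono.tendsto_atTop
    have hpt : Tendsto (fun k => (((d ∘ σ) k, (xs ∘ σ) k) : ℝ × (Fin N → ℝ)))
        atTop (𝓝 (δs, x)) := Filter.Tendsto.prodMk_nhds hdσ hσt
    have hlim : Tendsto (fun k => Φ ((d ∘ σ) k) ((xs ∘ σ) k)) atTop (𝓝 (Φ δs x)) :=
      (hΦc.tendsto (δs, x)).comp hpt
    have h1 : Φ δs x ≤ 0 :=
      le_of_tendsto hlim (Filter.Eventually.of_forall fun k => le_of_lt (hxsneg _))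
    exact ⟨x, hxnorm, le_antisymm h1 (claim1 x hxnorm)⟩
  -- symmetry of Mat δs
  have hsym : (Mat δs)ᵀ = Mat δs := by
    rw [hMat]
    simp [transpose_add, transpose_smul, transpose_one, transpose_mul,
      transpose_transpose, hH.eq]
  have hsymdp : ∀ u v : Fin N → ℝ, u ⬝ᵥ (Mat δs).mulVec v = v ⬝ᵥ (Mat δs).mulVec u := by
    intro u v
    rw [dotProduct_mulVec, ← mulVec_transpose, hsym, dotProduct_comm]
  -- kernel vector
  have hker : (Mat δs).mulVec x0 = 0 := by
    have hv : ∀ v : Fin N → ℝ, v ⬝ᵥ (Mat δs).mulVec x0 = 0 := by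
      intro v
      have hquad : ∀ t : ℝ, 0 ≤ (v ⬝ᵥ (Mat δs).mulVec v) * (t * t)
          + (2 * (v ⬝ᵥ (Mat δs).mulVec x0)) * t + 0 := by
        intro t
        have h := claim1' (x0 + t • v)
        rw [← key] at h
        have hexp : (x0 + t • v) ⬝ᵥ (Mat δs).mulVec (x0 + t • v)
            = x0 ⬝ᵥ (Mat δs).mulVec x0
              + t * (v ⬝ᵥ (Mat δs).mulVec x0) + t * (x0 ⬝ᵥ (Mat δs).mulVec v)
              + t * t * (v ⬝ᵥ (Mat δs).mulVec v) := by
          simp only [Matrix.mulVec_add, Matrix.mulVec_smul, dotProduct_add,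
            add_dotProduct, smul_dotProduct, dotProduct_smul, smul_eq_mul]
          ring
        rw [hexp, hsymdp x0 v, key, hx0zero] at h
        linarith
      have hd := discrim_le_zero hquad
      simp only [discrim] at hd
      nlinarith [sq_nonneg (v ⬝ᵥ (Mat δs).mulVec x0)]
    funext i
    have := hv (Pi.single i 1)
    rwa [single_dotProduct, one_mul] at this
  have hx0ne : x0 ≠ 0 := by
    intro h; rw [h, norm_zero] at hx0norm; exact one_ne_zero hx0norm.symm
  refine ⟨δs, hδspos, ?_⟩
  have hdet : (Mat δs).det = 0 :=
    Matrix.exists_mulVec_eq_zero_iff.mp ⟨x0, hx0ne, hker⟩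
  rw [hMat] at hdet
  exact hdet
end
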